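/- arXiv:2208.01091 — 6 statements merged into one kernel-verified Lean document; each statement's English description precedes it below -/
import Mathlib

section
/- Cauchy-type identity for single-row Grothendieck polynomials: for every integer ℓ ≥ 1 one has Σ_{i,j ≥ 0, i+j = ℓ} (-1)^j e_i(z) G_j(z) = Σ_{m=ℓ+1}^{k} (-1)^{m-ℓ-1} e_m(z) (that is, the left-hand side equals e_{ℓ+1}(z) − e_{ℓ+2}(z) + e_{ℓ+3}(z) − ⋯ ± e_k(z)) in ℤ[z_1,…,z_k]. -/
/-! With `E(t) = Σ (-1)^i e_i t^i` and `H(t) = Σ h_j t^j` one has `E · H = 1`: adjoining a variable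
`z` multiplies `E` by `1 - z t` and divides `H` by it. Writing `H_j(t) = Σ_a h_{j+a} t^a`, the
polynomial `G_j` is the sum of the coefficients of `t^0, …, t^k` in `H_j · E`. Splitting the vanishing
coefficient of `t^(ℓ+a)` in `E · H` at `t^ℓ` gives `Σ_{i+j=ℓ} (-1)^j e_i H_j = t · W · H` with
`W(t) = Σ_s (-1)^s e_{ℓ+1+s} t^s`, so the left-hand side is the sum of the first `k + 1`
coefficients of `t · W · H · E = t · W`. -/

open Finset MvPolynomial

noncomputable section

/-- The elementary symmetric polynomial `e_r` of a family of ring elements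
(`e_0 = 1`, `e_r = 0` for `r` larger than the number of elements). -/
def esymmF {R : Type*} [CommRing R] {m : ℕ} (f : Fin m → R) (r : ℕ) : R :=
  ∑ t ∈ Finset.powersetCard r Finset.univ, ∏ j ∈ t, f j

/-- The complete homogeneous symmetric polynomial `h_r` of a family of ring
elements: the sum of all monomials of degree `r` (`h_0 = 1`). -/
def hsymmF {R : Type*} [CommRing R] {m : ℕ} (f : Fin m → R) (r : ℕ) : R :=
  ∑ μ : Sym (Fin m) r, (μ.1.map f).prod

/-- `e_r(z)` in `ℤ[z_1,…,z_k]`. -/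
def eP (k : ℕ) (r : ℕ) : MvPolynomial (Fin k) ℤ :=
  esymmF (fun i => X i) r

/-- `h_r(z)` in `ℤ[z_1,…,z_k]`. -/
def hP (k : ℕ) (r : ℕ) : MvPolynomial (Fin k) ℤ :=
  hsymmF (fun i => X i) r

/-- The single-row Grothendieck polynomial
`G_j(z) = Σ_{a,b ≥ 0, a+b ≤ k} (-1)^b h_{j+a}(z) e_b(z)`. -/
def GP (k : ℕ) (j : ℕ) : MvPolynomial (Fin k) ℤ :=
  ∑ a ∈ Finset.range (k + 1), ∑ b ∈ Finset.range (k + 1 - a),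
    (-1) ^ b * hP k (j + a) * eP k b

section

variable {R : Type*} [CommRing R] {m : ℕ}

lemma esymmF_zero (f : Fin m → R) : esymmF f 0 = 1 := by
  simp [esymmF]

lemma esymmF_eq_zero_of_lt (f : Fin m → R) {r : ℕ} (h : m < r) : esymmF f r = 0 := by
  rw [esymmF, Finset.powersetCard_eq_empty.mpr (by simpa using h), Finset.sum_empty]

lemma esymmF_succ (f : Fin (m + 1) → R) (r : ℕ) :
    esymmF f (r + 1) = esymmF (Fin.tail f) (r + 1) + f 0 * esymmF (Fin.tail f) r := by
  simp only [esymmF, ← Finset.esymm_map_val, Fin.univ_succ, Finset.cons_val, Finset.map_val,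
    Multiset.map_cons, Multiset.map_map, Multiset.esymm, Multiset.powersetCard_cons]
  simp [Multiset.sum_map_mul_left, Fin.tail]

lemma hsymmF_zero (f : Fin m → R) : hsymmF f 0 = 1 := by
  simp [hsymmF, Sym.eq_nil_of_card_zero]

lemma hsymmF_succ (f : Fin (m + 1) → R) (r : ℕ) :
    hsymmF f (r + 1) = hsymmF (Fin.tail f) (r + 1) + f 0 * hsymmF f r := by
  let e : Sym (Fin (m + 1)) r ⊕ Sym (Fin m) (r + 1) ≃ Sym (Fin (m + 1)) (r + 1) :=
    (Equiv.sumCongr (Sym.equivCongr (finSuccEquiv m)) (Equiv.refl _)).trans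
      (symOptionSuccEquiv.symm.trans (Sym.equivCongr (finSuccEquiv m).symm))
  rw [hsymmF, ← e.sum_comp, Fintype.sum_sum_type, add_comm]
  simp [e, hsymmF, Finset.mul_sum, symOptionSuccEquiv, Fin.tail_def, Sym.coe_cons]

def grothF (f : Fin m → R) (K j : ℕ) : R :=
  ∑ a ∈ range (K + 1), ∑ b ∈ range (K + 1 - a), (-1) ^ b * hsymmF f (j + a) * esymmF f b

def altEsymmSeries (f : Fin m → R) : PowerSeries R :=
  PowerSeries.mk fun i => (-1) ^ i * esymmF f i

def hsymmSeries (f : Fin m → R) (j : ℕ) : PowerSeries R :=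
  PowerSeries.mk fun a => hsymmF f (j + a)

lemma altEsymmSeries_fin_zero (f : Fin 0 → R) : altEsymmSeries f = 1 := by
  ext (_ | n)
  · simp [altEsymmSeries, esymmF_zero]
  · simp [altEsymmSeries, esymmF_eq_zero_of_lt]

lemma hsymmSeries_fin_zero (f : Fin 0 → R) : hsymmSeries f 0 = 1 := by
  ext (_ | n)
  · simp [hsymmSeries, hsymmF_zero]
  · simp [hsymmSeries, hsymmF]

lemma altEsymmSeries_succ (f : Fin (m + 1) → R) :
    altEsymmSeries f =
      (1 - PowerSeries.C (f 0) * PowerSeries.X) * altEsymmSeries (Fin.tail f) := by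
  ext (_ | n)
  · simp [altEsymmSeries, esymmF_zero]
  · simp [altEsymmSeries, sub_mul, mul_assoc, esymmF_succ, pow_succ]
    ring

lemma hsymmSeries_succ (f : Fin (m + 1) → R) :
    (1 - PowerSeries.C (f 0) * PowerSeries.X) * hsymmSeries f 0 = hsymmSeries (Fin.tail f) 0 := by
  ext (_ | n)
  · simp [hsymmSeries, hsymmF_zero]
  · simp [hsymmSeries, sub_mul, mul_assoc, hsymmF_succ]

lemma altEsymmSeries_mul_hsymmSeries (f : Fin m → R) :
    altEsymmSeries f * hsymmSeries f 0 = 1 := by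
  induction m with
  | zero => rw [altEsymmSeries_fin_zero, hsymmSeries_fin_zero, one_mul]
  | succ m ih =>
    rw [altEsymmSeries_succ, mul_comm, ← mul_assoc, mul_comm _ (1 - _), hsymmSeries_succ, mul_comm,
      ih]

lemma sum_range_altEsymmF_mul_hsymmF (f : Fin m → R) {n : ℕ} (hn : n ≠ 0) :
    ∑ i ∈ range (n + 1), (-1) ^ i * esymmF f i * hsymmF f (n - i) = 0 := by
  have h := congrArg (PowerSeries.coeff n) (altEsymmSeries_mul_hsymmSeries f)
  simpa [PowerSeries.coeff_mul, Finset.Nat.sum_antidiagonal_eq_sum_range_succ_mk, altEsymmSeries,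
    hsymmSeries, hn] using h

lemma sum_range_neg_one_pow_mul_esymmF_mul_hsymmF_add (f : Fin m → R) {ℓ : ℕ} (hℓ : ℓ ≠ 0)
    (a : ℕ) :
    ∑ i ∈ range (ℓ + 1), (-1) ^ (ℓ - i) * esymmF f i * hsymmF f (ℓ - i + a) =
      ∑ t ∈ range a, (-1) ^ t * esymmF f (ℓ + 1 + t) * hsymmF f (a - 1 - t) := by
  have h := sum_range_altEsymmF_mul_hsymmF f (n := ℓ + a) (by omega)
  rw [show ℓ + a + 1 = ℓ + 1 + a by omega, Finset.sum_range_add] at h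
  have low : ∀ i ∈ range (ℓ + 1), (-1) ^ (ℓ - i) * esymmF f i * hsymmF f (ℓ - i + a) =
      (-1) ^ ℓ * ((-1) ^ i * esymmF f i * hsymmF f (ℓ + a - i)) := by
    intro i hi
    have hi := Finset.mem_range.mp hi
    have sign : (-1 : R) ^ (ℓ - i) = (-1) ^ ℓ * (-1) ^ i := by
      rw [← pow_add]; exact neg_one_pow_congr (by simp only [Nat.even_iff]; omega)
    rw [sign, show ℓ - i + a = ℓ + a - i by omega]
    ring
  have high : ∀ t ∈ range a, (-1) ^ t * esymmF f (ℓ + 1 + t) * hsymmF f (a - 1 - t) =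
      -(-1) ^ ℓ * ((-1) ^ (ℓ + 1 + t) * esymmF f (ℓ + 1 + t) * hsymmF f (ℓ + a - (ℓ + 1 + t))) := by
    intro t _
    have sign : (-1 : R) ^ t = -(-1) ^ ℓ * (-1) ^ (ℓ + 1 + t) := by
      rw [neg_mul, ← pow_add, ← neg_one_mul ((-1 : R) ^ _), ← pow_succ']
      exact neg_one_pow_congr (by simp only [Nat.even_iff]; omega)
    rw [sign, show ℓ + a - (ℓ + 1 + t) = a - 1 - t by omega]
    ring
  rw [Finset.sum_congr rfl low, Finset.sum_congr rfl high, ← Finset.mul_sum, ← Finset.mul_sum]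
  linear_combination (-1) ^ ℓ * h

lemma sum_antidiagonal_smul_hsymmSeries (f : Fin m → R) {ℓ : ℕ} (hℓ : ℓ ≠ 0) :
    ∑ p ∈ antidiagonal ℓ, ((-1) ^ p.2 * esymmF f p.1) • hsymmSeries f p.2 =
      PowerSeries.X * PowerSeries.mk (fun t => (-1) ^ t * esymmF f (ℓ + 1 + t)) *
        hsymmSeries f 0 := by
  ext a
  simp only [map_sum, PowerSeries.coeff_smul, hsymmSeries, PowerSeries.coeff_mk, smul_eq_mul]
  rw [Finset.Nat.sum_antidiagonal_eq_sum_range_succ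
      (fun i j => (-1) ^ j * esymmF f i * hsymmF f (j + a)),
    sum_range_neg_one_pow_mul_esymmF_mul_hsymmF_add f hℓ a]
  rcases a with _ | c
  · simp
  · rw [mul_assoc, PowerSeries.coeff_succ_X_mul, PowerSeries.coeff_mul,
      Finset.Nat.sum_antidiagonal_eq_sum_range_succ_mk]
    simp

lemma grothF_eq_sum_coeff (f : Fin m → R) (K j : ℕ) :
    grothF f K j =
      ∑ n ∈ range (K + 1), PowerSeries.coeff n (hsymmSeries f j * altEsymmSeries f) := by
  rw [grothF, ← Finset.sum_range_diag_flip]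
  refine Finset.sum_congr rfl fun n _ => ?_
  rw [PowerSeries.coeff_mul, Finset.Nat.sum_antidiagonal_eq_sum_range_succ_mk]
  refine Finset.sum_congr rfl fun a _ => ?_
  simp only [hsymmSeries, altEsymmSeries, PowerSeries.coeff_mk]
  ring

lemma sum_antidiagonal_mul_grothF (f : Fin m → R) (K : ℕ) {ℓ : ℕ} (hℓ : ℓ ≠ 0) :
    ∑ p ∈ antidiagonal ℓ, (-1) ^ p.2 * esymmF f p.1 * grothF f K p.2 =
      ∑ t ∈ range K, (-1) ^ t * esymmF f (ℓ + 1 + t) := by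
  simp_rw [grothF_eq_sum_coeff, Finset.mul_sum]
  rw [Finset.sum_comm]
  have series : ∑ p ∈ antidiagonal ℓ,
      ((-1) ^ p.2 * esymmF f p.1) • (hsymmSeries f p.2 * altEsymmSeries f) =
        PowerSeries.X * PowerSeries.mk fun t => (-1) ^ t * esymmF f (ℓ + 1 + t) := by
    simp_rw [← smul_mul_assoc, ← Finset.sum_mul, sum_antidiagonal_smul_hsymmSeries f hℓ, mul_assoc,
      mul_comm (hsymmSeries f 0), altEsymmSeries_mul_hsymmSeries, mul_one]
  calc _ = ∑ n ∈ range (K + 1), PowerSeries.coeff n (∑ p ∈ antidiagonal ℓ,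
        ((-1) ^ p.2 * esymmF f p.1) • (hsymmSeries f p.2 * altEsymmSeries f)) := by
        simp [map_sum]
    _ = _ := by
      rw [series, Finset.sum_range_succ']
      simp

lemma sum_range_esymmF_eq_sum_Icc (f : Fin m → R) (ℓ : ℕ) :
    ∑ t ∈ range m, (-1) ^ t * esymmF f (ℓ + 1 + t) =
      ∑ r ∈ Icc (ℓ + 1) m, (-1) ^ (r - ℓ - 1) * esymmF f r := by
  rw [← Finset.Ico_add_one_right_eq_Icc, Finset.sum_Ico_eq_sum_range,
    ← Finset.sum_subset (Finset.range_subset_range.mpr (by omega : m + 1 - (ℓ + 1) ≤ m))]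
  · refine Finset.sum_congr rfl fun t _ => ?_
    rw [show ℓ + 1 + t - ℓ - 1 = t by omega]
  · intro t _ ht
    rw [esymmF_eq_zero_of_lt f (by rw [Finset.mem_range] at ht; omega), mul_zero]

end

theorem cauchy_groth_general (k : ℕ) (ℓ : ℕ) (hℓ : 1 ≤ ℓ) :
    ∑ p ∈ Finset.HasAntidiagonal.antidiagonal ℓ, (-1) ^ p.2 * eP k p.1 * GP k p.2
      = ∑ m ∈ Finset.Icc (ℓ + 1) k, (-1) ^ (m - ℓ - 1) * eP k m := by
  exact (sum_antidiagonal_mul_grothF _ k (by omega)).trans (sum_range_esymmF_eq_sum_Icc _ ℓ)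

/-- Cauchy-type identity for single-row Grothendieck polynomials:
for `ℓ ≥ 1`, `Σ_{i+j=ℓ} (-1)^j e_i(z) G_j(z) = e_{ℓ+1}(z) - e_{ℓ+2}(z) + ⋯ ± e_k(z)`. -/
theorem cauchy_groth (k : ℕ) (hk : 1 ≤ k) (ℓ : ℕ) (hℓ : 1 ≤ ℓ) :
    ∑ p ∈ Finset.HasAntidiagonal.antidiagonal ℓ, (-1) ^ p.2 * eP k p.1 * GP k p.2
      = ∑ m ∈ Finset.Icc (ℓ + 1) k, (-1) ^ (m - ℓ - 1) * eP k m :=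
  cauchy_groth_general k ℓ hℓ

end
end

section
/- Vanishing case of the Cauchy-type identity for Grothendieck polynomials: for every integer ℓ ≥ k one has Σ_{i,j ≥ 0, i+j = ℓ} (-1)^j e_i(z) G_j(z) = 0 in ℤ[z_1,…,z_k]. -/
/-!
The generating series `∏ (1 - z_i t)` and `∏ (1 - z_i t)⁻¹` of the `(-1)^i e_i` and the `h_j`
are inverse to each other, so `Σ_{i+j=n} (-1)^i e_i h_j = 0` for `n ≥ 1`. Expanding `G_j`, the
sum in question is a combination of the sums `Σ_{i+j=ℓ} (-1)^j e_i h_{j+a}`, `a ≥ 0`. As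
`e_i = 0` for `i > k` and `ℓ ≥ k`, each of these is `±Σ_{i+j=ℓ+a} (-1)^i e_i h_j`, hence zero.
-/

open Finset MvPolynomial

noncomputable section

theorem Finsupp.prod_map_toMultiset {ι M : Type*} [Fintype ι] [CommMonoid M] (f : ι → M)
    (l : ι →₀ ℕ) : ((Finsupp.toMultiset l).map f).prod = ∏ i, f i ^ l i := by
  classical
  rw [Finset.prod_multiset_map_count, Finsupp.toFinset_toMultiset]
  simp only [Finsupp.count_toMultiset]
  exact Finset.prod_subset (Finset.subset_univ _) fun i _ hi => by
    rw [Finsupp.notMem_support_iff.1 hi, pow_zero]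

namespace MvPolynomial

variable {σ R : Type*} [Fintype σ] [CommRing R]

theorem esymm_eq_zero_of_card_lt {n : ℕ} (h : Fintype.card σ < n) : esymm σ R n = 0 := by
  rw [esymm, powersetCard_eq_empty.2 (by simpa using h), sum_empty]

theorem coeff_prod_one_sub_C_X_mul_X (n : ℕ) :
    PowerSeries.coeff n (∏ i, (1 - PowerSeries.C (X i : MvPolynomial σ R) * PowerSeries.X)) =
      (-1) ^ n * esymm σ R n := by
  have hsub (x : MvPolynomial σ R) :
      1 - PowerSeries.C x * PowerSeries.X = 1 + PowerSeries.C (-x) * PowerSeries.X := by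
    rw [map_neg, neg_mul, sub_eq_add_neg]
  simp_rw [hsub, prod_one_add, prod_mul_distrib, prod_const, ← map_prod, map_sum,
    PowerSeries.coeff_C_mul_X_pow, prod_neg, sum_ite, sum_const_zero, add_zero, esymm,
    powersetCard_eq_filter, mul_sum, eq_comm (a := n)]
  exact sum_congr rfl fun t ht => by rw [(mem_filter.1 ht).2]

theorem coeff_prod_rescale_mk_one [DecidableEq σ] (n : ℕ) :
    PowerSeries.coeff n (∏ i, PowerSeries.rescale (X i : MvPolynomial σ R) (PowerSeries.mk 1)) =
      hsymm σ R n := by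
  simp only [PowerSeries.coeff_prod, PowerSeries.rescale_mk, PowerSeries.coeff_mk, Pi.one_apply,
    mul_one]
  unfold hsymm
  refine sum_bij' (fun l hl => ⟨Finsupp.toMultiset l, by
      simpa [Finsupp.sum_fintype] using (mem_finsuppAntidiag.1 hl).1⟩)
    (fun s _ => Multiset.toFinsupp s.1) (fun _ _ => mem_univ _) (fun s _ => ?_) (fun l _ => ?_)
    (fun s _ => ?_) (fun l _ => (Finsupp.prod_map_toMultiset X l).symm)
  · refine mem_finsuppAntidiag.2 ⟨?_, subset_univ _⟩
    exact (Multiset.sum_count_eq_card fun a _ => mem_univ a).trans s.2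
  · simp
  · ext1; simp

theorem sum_antidiagonal_neg_one_pow_mul_esymm_mul_hsymm [DecidableEq σ] {n : ℕ} (hn : n ≠ 0) :
    ∑ p ∈ antidiagonal n, (-1) ^ p.1 * esymm σ R p.1 * hsymm σ R p.2 = 0 := by
  have hinv : (∏ i, (1 - PowerSeries.C (X i : MvPolynomial σ R) * PowerSeries.X)) *
      ∏ i, PowerSeries.rescale (X i : MvPolynomial σ R) (PowerSeries.mk 1) = 1 := by
    rw [← prod_mul_distrib]
    refine prod_eq_one fun i _ => ?_
    rw [← PowerSeries.rescale_X, ← map_one (PowerSeries.rescale _), ← map_sub, ← map_mul,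
      mul_comm, PowerSeries.mk_one_mul_one_sub_eq_one, map_one]
  have := congrArg (PowerSeries.coeff n) hinv
  simpa only [PowerSeries.coeff_mul, coeff_prod_one_sub_C_X_mul_X, coeff_prod_rescale_mk_one,
    PowerSeries.coeff_one, if_neg hn] using this

theorem sum_antidiagonal_neg_one_pow_mul_esymm_mul_hsymm_add [DecidableEq σ] {ℓ a : ℕ}
    (hℓ : Fintype.card σ ≤ ℓ) (hℓa : ℓ + a ≠ 0) :
    ∑ p ∈ antidiagonal ℓ, (-1) ^ p.2 * esymm σ R p.1 * hsymm σ R (p.2 + a) = 0 := by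
  rw [← neg_one_pow_mul_eq_zero_iff (n := ℓ)]
  calc (-1) ^ ℓ * ∑ p ∈ antidiagonal ℓ, (-1) ^ p.2 * esymm σ R p.1 * hsymm σ R (p.2 + a)
      = ∑ i ∈ range (ℓ + 1), (-1) ^ i * esymm σ R i * hsymm σ R (ℓ + a - i) := by
        rw [mul_sum, Nat.sum_antidiagonal_eq_sum_range_succ_mk]
        refine sum_congr rfl fun i hi => ?_
        obtain ⟨j, rfl⟩ : ∃ j, ℓ = i + j := ⟨ℓ - i, by simp at hi; omega⟩
        have hsq : (-1 : MvPolynomial σ R) ^ j * (-1) ^ j = 1 := by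
          rw [← pow_add]; exact (Even.add_self j).neg_one_pow
        rw [Nat.add_sub_cancel_left, show i + j + a - i = j + a by omega]
        linear_combination (-1) ^ i * esymm σ R i * hsymm σ R (j + a) * hsq
    _ = ∑ i ∈ range (ℓ + a + 1), (-1) ^ i * esymm σ R i * hsymm σ R (ℓ + a - i) :=
        sum_subset (range_subset_range.2 (by omega)) fun i _ hi => by
          rw [esymm_eq_zero_of_card_lt (by simp at hi; omega), mul_zero, zero_mul]
    _ = 0 := by
        rw [← Nat.sum_antidiagonal_eq_sum_range_succ
          (fun i j => (-1) ^ i * esymm σ R i * hsymm σ R j)]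
        exact sum_antidiagonal_neg_one_pow_mul_esymm_mul_hsymm hℓa

end MvPolynomial

/-- Vanishing case of the Cauchy-type identity for Grothendieck polynomials:
for `ℓ ≥ k`, `Σ_{i+j=ℓ} (-1)^j e_i(z) G_j(z) = 0`. -/
theorem cauchy_groth_vanishing (k : ℕ) (hk : 1 ≤ k) (ℓ : ℕ) (hℓ : k ≤ ℓ) :
    ∑ p ∈ _root_.Finset.HasAntidiagonal.antidiagonal ℓ, (-1) ^ p.2 * eP k p.1 * GP k p.2 = 0 := by
  have hshift (a : ℕ) :
      ∑ p ∈ antidiagonal ℓ, (-1) ^ p.2 * eP k p.1 * hP k (p.2 + a) = 0 :=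
    -- `eP k` and `hP k` unfold to Mathlib's `esymm (Fin k) ℤ` and `hsymm (Fin k) ℤ`
    sum_antidiagonal_neg_one_pow_mul_esymm_mul_hsymm_add (by simpa using hℓ) (by omega)
  calc ∑ p ∈ antidiagonal ℓ, (-1) ^ p.2 * eP k p.1 * GP k p.2
      = ∑ a ∈ range (k + 1), ∑ b ∈ range (k + 1 - a), (-1) ^ b * eP k b *
          ∑ p ∈ antidiagonal ℓ, (-1) ^ p.2 * eP k p.1 * hP k (p.2 + a) := by
        simp only [GP, mul_sum]
        rw [sum_comm]
        refine sum_congr rfl fun a _ => ?_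
        rw [sum_comm]
        exact sum_congr rfl fun b _ => sum_congr rfl fun p _ => by ring
    _ = 0 := by simp only [hshift, mul_zero, sum_const_zero]

end
end

section
/- Matrix identity G = A·H relating Grothendieck and complete homogeneous polynomials: for integers n ≥ k ≥ 1 and every 1 ≤ i ≤ k, (-1)^{n-k+i} G_{n-k+i}(z) = Σ_{j=1}^{k} A_{ij} · (-1)^{n-k+j} h_{n-k+j}(z) in ℤ[z_1,…,z_k], where A is the k×k matrix defined below. -/
open Finset MvPolynomial

noncomputable section

variable {k : ℕ}


lemma prod_map_X (μ : Multiset (Fin k)) :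
    (μ.map (X (R := ℤ))).prod = monomial μ.toFinsupp 1 := by
  induction μ using Multiset.induction_on with
  | empty => simp [monomial_zero', C_1]
  | cons a s ih =>
      rw [Multiset.map_cons, Multiset.prod_cons, ih, show a ::ₘ s = {a} + s from rfl,
        Multiset.toFinsupp_add, Multiset.toFinsupp_singleton,
        X, monomial_mul, one_mul]

lemma hP_eq (r : ℕ) : hP k r = ∑ μ : Sym (Fin k) r, monomial (μ.1.toFinsupp) (1:ℤ) := by
  unfold hP hsymmF
  exact Finset.sum_congr rfl fun μ _ => prod_map_X μ.1

def indF (S : Finset (Fin k)) : Fin k →₀ ℕ := ∑ j ∈ S, Finsupp.single j 1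

lemma prod_X_S (S : Finset (Fin k)) : (∏ j ∈ S, X j : MvPolynomial (Fin k) ℤ)
    = monomial (indF S) 1 := by
  classical
  induction S using Finset.induction_on with
  | empty => simp [indF, monomial_zero', C_1]
  | @insert a s h ih =>
      rw [Finset.prod_insert h, ih, X, monomial_mul, one_mul,
        show indF (insert a s) = Finsupp.single a 1 + indF s by
          simp [indF, Finset.sum_insert h]]

lemma eP_eq (b : ℕ) : eP k b = ∑ S ∈ powersetCard b (univ : Finset (Fin k)),
    monomial (indF S) (1:ℤ) := by
  unfold eP esymmF
  exact Finset.sum_congr rfl fun S _ => prod_X_S S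

lemma indF_apply (S : Finset (Fin k)) (x : Fin k) : indF S x = if x ∈ S then 1 else 0 := by
  classical
  simp [indF, Finsupp.finset_sum_apply, Finsupp.single_apply, Finset.sum_ite_eq' S x]

lemma indF_le_iff (S : Finset (Fin k)) (c : Fin k →₀ ℕ) :
    indF S ≤ c ↔ S ⊆ c.support := by
  constructor
  · intro h x hx
    have := h x
    rw [indF_apply, if_pos hx] at this
    simp only [Finsupp.mem_support_iff]
    omega
  · intro h x
    rw [indF_apply]
    split_ifs with hx
    · have := h hx
      simp only [Finsupp.mem_support_iff] at this
      omega
    · omega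

lemma deg_indF (S : Finset (Fin k)) : (∑ x, indF S x) = S.card := by
  classical
  rw [Finset.card_eq_sum_ones]
  rw [← Finset.sum_subset (Finset.subset_univ S) (f := fun x => indF S x)]
  · exact Finset.sum_congr rfl fun x hx => by rw [indF_apply, if_pos hx]
  · intro x _ hx
    rw [indF_apply, if_neg hx]

lemma deg_sub (S : Finset (Fin k)) (c : Fin k →₀ ℕ) (h : indF S ≤ c) :
    (∑ x, (c - indF S) x) = (∑ x, c x) - S.card := by
  classical
  rw [← deg_indF S, eq_tsub_iff_add_eq_of_le]
  · rw [← Finset.sum_add_distrib]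
    apply Finset.sum_congr rfl
    intro x _
    rw [Finsupp.tsub_apply]
    have := h x
    omega
  · exact Finset.sum_le_sum fun x _ => h x

lemma card_le_deg (S : Finset (Fin k)) (c : Fin k →₀ ℕ) (h : indF S ≤ c) :
    S.card ≤ ∑ x, c x := by
  calc S.card = ∑ x, indF S x := (deg_indF S).symm
  _ ≤ ∑ x, c x := Finset.sum_le_sum fun x _ => h x

lemma coeff_hP (r : ℕ) (c : Fin k →₀ ℕ) :
    coeff c (hP k r) = if (∑ x, c x) = r then 1 else 0 := by
  classical
  have hcard : ∀ μ : Sym (Fin k) r, (∑ x, (Multiset.toFinsupp μ.1) x) = r := by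
    intro μ
    have h1 : (Multiset.toFinsupp μ.1).sum (fun _ n => n) = ∑ x, Multiset.toFinsupp μ.1 x :=
      Finsupp.sum_fintype _ _ (fun _ => rfl)
    have h2 := Multiset.toFinsupp_sum_eq μ.1
    have h3 := μ.2
    rw [← h1]
    rw [show ((fun _ n => n) : Fin k → ℕ → ℕ) = (fun _ => id) from rfl, h2]
    exact h3
  rw [hP_eq, MvPolynomial.coeff_sum]
  simp only [coeff_monomial]
  split_ifs with hc
  · have hm : Multiset.card (Finsupp.toMultiset c) = r := by
      rw [Finsupp.card_toMultiset]
      rw [show ((fun _ => id) : Fin k → ℕ → ℕ) = (fun _ n => n) from rfl]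
      rw [Finsupp.sum_fintype _ _ (fun _ => rfl)]
      exact hc
    let μ₀ : Sym (Fin k) r := ⟨Finsupp.toMultiset c, hm⟩
    refine (Finset.sum_eq_single_of_mem μ₀ (Finset.mem_univ _) ?_).trans ?_
    · intro μ _ hne
      rw [if_neg]
      intro h
      apply hne
      apply Subtype.ext
      show μ.1 = μ₀.1
      rw [Multiset.toFinsupp_eq_iff] at h
      exact h
    · show (if Multiset.toFinsupp μ₀.1 = c then (1:ℤ) else 0) = 1
      rw [if_pos]
      exact Finsupp.toMultiset_toFinsupp c
  · apply Finset.sum_eq_zero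
    intro μ _
    rw [if_neg]
    intro h
    apply hc
    rw [← h]
    exact hcard μ

lemma key (r : ℕ) (hr : k + 1 ≤ r) :
    ∑ b ∈ Finset.range (k+1), ((-1 : MvPolynomial (Fin k) ℤ))^b * eP k b * hP k (r - b) = 0 := by
  classical
  apply MvPolynomial.ext
  intro c
  rw [MvPolynomial.coeff_sum, MvPolynomial.coeff_zero]
  have step : ∀ b ∈ Finset.range (k+1),
      coeff c ((-1 : MvPolynomial (Fin k) ℤ)^b * eP k b * hP k (r - b))
        = (-1:ℤ)^b * ∑ S ∈ powersetCard b (univ : Finset (Fin k)),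
            (if S ⊆ c.support ∧ (∑ x, c x) = r then (1:ℤ) else 0) := by
    intro b hb
    have hbk : b ≤ k := by simpa using Nat.lt_succ_iff.mp (Finset.mem_range.mp hb)
    have hC : ((-1 : MvPolynomial (Fin k) ℤ))^b = C ((-1:ℤ)^b) := by simp
    rw [mul_assoc, hC, MvPolynomial.coeff_C_mul]
    congr 1
    rw [eP_eq, Finset.sum_mul, MvPolynomial.coeff_sum]
    apply Finset.sum_congr rfl
    intro S hS
    have hSb : S.card = b := (Finset.mem_powersetCard.mp hS).2
    rw [MvPolynomial.coeff_monomial_mul', coeff_hP]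
    by_cases h1 : indF S ≤ c
    · rw [if_pos h1, one_mul, deg_sub S c h1]
      have hsub := (indF_le_iff S c).mp h1
      have hle := card_le_deg S c h1
      split_ifs with h2 h3 h3
      · rfl
      · exact absurd ⟨hsub, by omega⟩ h3
      · omega
      · rfl
    · rw [if_neg h1, if_neg]
      intro hand
      exact h1 ((indF_le_iff S c).mpr hand.1)
  rw [Finset.sum_congr rfl step]
  by_cases hc : (∑ x, c x) = r
  · have hsupp : c.support.Nonempty := by
      rw [Finset.nonempty_iff_ne_empty]
      intro h0
      have : ∀ x, c x = 0 := by
        intro x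
        by_contra hx
        exact absurd (Finsupp.mem_support_iff.mpr hx) (by simp [h0])
      have : (∑ x, c x) = 0 := Finset.sum_eq_zero fun x _ => this x
      omega
    have hinner : ∀ b, (∑ S ∈ powersetCard b (univ : Finset (Fin k)),
        (if S ⊆ c.support ∧ (∑ x, c x) = r then (1:ℤ) else 0))
          = ∑ S ∈ powersetCard b c.support, (1:ℤ) := by
      intro b
      rw [← Finset.sum_filter]
      apply Finset.sum_congr _ (fun _ _ => rfl)
      ext S
      simp only [Finset.mem_filter, Finset.mem_powersetCard, Finset.subset_univ, true_and, hc,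
        and_true]
      tauto
    simp only [hinner]
    have := Finset.sum_powerset_neg_one_pow_card_of_nonempty (x := c.support) hsupp
    rw [Finset.sum_powerset c.support (fun t => ((-1:ℤ))^t.card)] at this
    rw [← this]
    have hck : c.support.card ≤ k := by
      have := Finset.card_le_univ c.support
      simpa [Finset.card_univ] using this
    rw [Finset.sum_subset (Finset.range_subset_range.mpr (by omega) :
        Finset.range (c.support.card + 1) ⊆ Finset.range (k+1))]
    · apply Finset.sum_congr rfl
      intro b _
      calc (-1:ℤ)^b * ∑ _S ∈ powersetCard b c.support, (1:ℤ)
          = ∑ _S ∈ powersetCard b c.support, (-1:ℤ)^b := by rw [Finset.mul_sum]; simp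
        _ = ∑ t ∈ powersetCard b c.support, (-1:ℤ)^t.card :=
            Finset.sum_congr rfl fun t ht => by rw [(Finset.mem_powersetCard.mp ht).2]
    · intro b _ hb
      have : c.support.card < b := by
        simp only [Finset.mem_range] at *
        omega
      rw [Finset.powersetCard_eq_empty.mpr this]
      simp
  · apply Finset.sum_eq_zero
    intro b _
    simp [hc]


lemma npc {R : Type*} [CommRing R] {a b : ℕ} (h : a % 2 = b % 2) :
    (-1:R)^a = (-1)^b := by
  rw [neg_one_pow_eq_pow_mod_two, h, ← neg_one_pow_eq_pow_mod_two]

lemma sgn3 {R : Type*} [CommRing R] (p q s : ℕ) (A B : R) :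
    (-1)^p * ((-1)^q * A) * ((-1)^s * B) = (-1)^(p+q+s) * (A*B) := by
  rw [pow_add, pow_add]; ring

/-- The truncation `c^z_{≥j} = Σ_{i=j}^{k} (-1)^{i-j} e_i(z)`. -/
def cGe (k : ℕ) (j : ℕ) : MvPolynomial (Fin k) ℤ :=
  ∑ i ∈ Finset.Icc j k, (-1) ^ (i - j) * eP k i

/-- The truncation `c^z_{≤m} = Σ_{i=0}^{m} (-1)^i e_i(z)`. -/
def cLe (k : ℕ) (m : ℕ) : MvPolynomial (Fin k) ℤ :=
  ∑ i ∈ Finset.range (m + 1), (-1) ^ i * eP k i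

/-- The `k × k` matrix `A` (with `1`-based indices `i, j`):
`A_{ij} = (-1)^{k-i} c^z_{≥ k-j+1}` for `j < i` and `A_{ij} = (-1)^{j-i} c^z_{≤ k-j}` for `j ≥ i`. -/
def AMat (k : ℕ) (i j : ℕ) : MvPolynomial (Fin k) ℤ :=
  if j < i then (-1) ^ (k - i) * cGe k (k - j + 1) else (-1) ^ (j - i) * cLe k (k - j)


lemma piece2 (i m : ℕ) (hi1 : 1 ≤ i) (hik : i ≤ k) :
    ∑ j ∈ Finset.Icc 1 k, AMat k i j * ((-1)^(m+j) * hP k (m+j))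
    = ∑ j ∈ Finset.Icc 1 (k+i), ∑ b ∈ Finset.range (k+1),
        ((if j < i ∧ k+1 ≤ b+j then
            ((-1:MvPolynomial (Fin k) ℤ))^(m+i+b+1) * (eP k b * hP k (m+j)) else 0)
         + (if i ≤ j ∧ b+j ≤ k then
            ((-1:MvPolynomial (Fin k) ℤ))^(m+i+b) * (eP k b * hP k (m+j)) else 0)) := by
  classical
  have hsub : Finset.Icc 1 k ⊆ Finset.Icc 1 (k+i) := Finset.Icc_subset_Icc_right (by omega)
  rw [← Finset.sum_subset hsub ?van]
  case van =>
    intro j hj hj'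
    simp only [Finset.mem_Icc] at hj hj'
    apply Finset.sum_eq_zero
    intro b hb
    rw [if_neg (by omega), if_neg (by omega), add_zero]
  apply Finset.sum_congr rfl
  intro j hj
  simp only [Finset.mem_Icc] at hj
  rw [AMat]
  by_cases hji : j < i
  · rw [if_pos hji]
    have hz : ∀ b ∈ Finset.range (k+1),
        ((if j < i ∧ k+1 ≤ b+j then
            ((-1:MvPolynomial (Fin k) ℤ))^(m+i+b+1) * (eP k b * hP k (m+j)) else 0)
         + (if i ≤ j ∧ b+j ≤ k then
            ((-1:MvPolynomial (Fin k) ℤ))^(m+i+b) * (eP k b * hP k (m+j)) else 0))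
        = (if j < i ∧ k+1 ≤ b+j then
            ((-1:MvPolynomial (Fin k) ℤ))^(m+i+b+1) * (eP k b * hP k (m+j)) else 0) := by
      intro b hb
      rw [if_neg (show ¬(i ≤ j ∧ b+j ≤ k) by omega), add_zero]
    rw [Finset.sum_congr rfl hz, ← Finset.sum_filter]
    have hfil : (Finset.range (k+1)).filter (fun b => j < i ∧ k+1 ≤ b+j)
        = Finset.Icc (k-j+1) k := by
      ext b
      simp only [Finset.mem_filter, Finset.mem_range, Finset.mem_Icc]
      omega
    rw [hfil, cGe, Finset.mul_sum, Finset.sum_mul]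
    apply Finset.sum_congr rfl
    intro b hb
    simp only [Finset.mem_Icc] at hb
    rw [sgn3]
    congr 1
    apply npc
    omega
  · rw [if_neg hji]
    have hz : ∀ b ∈ Finset.range (k+1),
        ((if j < i ∧ k+1 ≤ b+j then
            ((-1:MvPolynomial (Fin k) ℤ))^(m+i+b+1) * (eP k b * hP k (m+j)) else 0)
         + (if i ≤ j ∧ b+j ≤ k then
            ((-1:MvPolynomial (Fin k) ℤ))^(m+i+b) * (eP k b * hP k (m+j)) else 0))
        = (if i ≤ j ∧ b+j ≤ k then
            ((-1:MvPolynomial (Fin k) ℤ))^(m+i+b) * (eP k b * hP k (m+j)) else 0) := by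
      intro b hb
      rw [if_neg (show ¬(j < i ∧ k+1 ≤ b+j) by omega), zero_add]
    rw [Finset.sum_congr rfl hz, ← Finset.sum_filter]
    have hfil : (Finset.range (k+1)).filter (fun b => i ≤ j ∧ b+j ≤ k)
        = Finset.range (k-j+1) := by
      ext b
      simp only [Finset.mem_filter, Finset.mem_range]
      omega
    rw [hfil, cLe, Finset.mul_sum, Finset.sum_mul]
    apply Finset.sum_congr rfl
    intro b hb
    simp only [Finset.mem_range] at hb
    rw [sgn3]
    congr 1
    apply npc
    omega


lemma piece1 (i m : ℕ) (hi1 : 1 ≤ i) :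
    (-1:MvPolynomial (Fin k) ℤ)^(m+i) * GP k (m+i)
    = ∑ j ∈ Finset.Icc 1 (k+i), ∑ b ∈ Finset.range (k+1),
        (if i ≤ j ∧ b+j ≤ k+i then
          ((-1:MvPolynomial (Fin k) ℤ))^(m+i+b) * (eP k b * hP k (m+j)) else 0) := by
  classical
  rw [GP, Finset.mul_sum]
  have inner : ∀ a ∈ Finset.range (k+1),
      (-1:MvPolynomial (Fin k) ℤ)^(m+i) *
        (∑ b ∈ Finset.range (k+1-a), (-1)^b * hP k ((m+i)+a) * eP k b)
      = ∑ b ∈ Finset.range (k+1),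
          (if i ≤ i+a ∧ b+(i+a) ≤ k+i then
            ((-1:MvPolynomial (Fin k) ℤ))^(m+i+b) * (eP k b * hP k (m+(i+a))) else 0) := by
    intro a ha
    simp only [Finset.mem_range] at ha
    rw [← Finset.sum_filter]
    have hfil : (Finset.range (k+1)).filter (fun b => i ≤ i+a ∧ b+(i+a) ≤ k+i)
        = Finset.range (k+1-a) := by
      ext b
      simp only [Finset.mem_filter, Finset.mem_range]
      omega
    rw [hfil, Finset.mul_sum]
    apply Finset.sum_congr rfl
    intro b hb
    have : m + i + a = m + (i + a) := by omega
    rw [this, pow_add]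
    ring
  rw [Finset.sum_congr rfl inner]
  have hbij := Finset.sum_nbij' (s := Finset.range (k+1)) (t := Finset.Icc i (i+k))
    (f := fun a => ∑ b ∈ Finset.range (k+1),
      (if i ≤ i+a ∧ b+(i+a) ≤ k+i then
        ((-1:MvPolynomial (Fin k) ℤ))^(m+i+b) * (eP k b * hP k (m+(i+a))) else 0))
    (g := fun j => ∑ b ∈ Finset.range (k+1),
      (if i ≤ j ∧ b+j ≤ k+i then
        ((-1:MvPolynomial (Fin k) ℤ))^(m+i+b) * (eP k b * hP k (m+j)) else 0))
    (fun a => i + a) (fun j => j - i)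
    (fun a ha => by simp only [Finset.mem_range] at ha; simp only [Finset.mem_Icc]; omega)
    (fun j hj => by simp only [Finset.mem_Icc] at hj; simp only [Finset.mem_range]; omega)
    (fun a ha => by show i + a - i = a; omega)
    (fun j hj => by simp only [Finset.mem_Icc] at hj; show i + (j - i) = j; omega)
    (fun a ha => rfl)
  rw [hbij]
  rw [← Finset.sum_subset (show Finset.Icc i (i+k) ⊆ Finset.Icc 1 (k+i) by
      apply Finset.Icc_subset_Icc <;> omega)]
  intro j hj hj'
  simp only [Finset.mem_Icc] at hj hj'
  apply Finset.sum_eq_zero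
  intro b hb
  rw [if_neg (by omega)]


lemma piece3 (i m : ℕ) :
    ∑ j ∈ Finset.Icc 1 (k+i), ∑ b ∈ Finset.range (k+1),
      (if k+1 ≤ b+j ∧ b+j ≤ k+i then
        ((-1:MvPolynomial (Fin k) ℤ))^(m+i+b) * (eP k b * hP k (m+j)) else 0) = 0 := by
  classical
  rw [Finset.sum_comm]
  have inner : ∀ b ∈ Finset.range (k+1),
      (∑ j ∈ Finset.Icc 1 (k+i),
        (if k+1 ≤ b+j ∧ b+j ≤ k+i then
          ((-1:MvPolynomial (Fin k) ℤ))^(m+i+b) * (eP k b * hP k (m+j)) else 0))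
      = ∑ s ∈ Finset.Icc (k+1) (k+i),
          ((-1:MvPolynomial (Fin k) ℤ))^(m+i+b) * (eP k b * hP k (m+s-b)) := by
    intro b hb
    simp only [Finset.mem_range] at hb
    rw [← Finset.sum_filter]
    have hfil : (Finset.Icc 1 (k+i)).filter (fun j => k+1 ≤ b+j ∧ b+j ≤ k+i)
        = Finset.Icc (k+1-b) (k+i-b) := by
      ext j
      simp only [Finset.mem_filter, Finset.mem_Icc]
      omega
    rw [hfil]
    exact Finset.sum_nbij' (fun j => j + b) (fun s => s - b)
      (fun j hj => by simp only [Finset.mem_Icc] at *; omega)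
      (fun s hs => by simp only [Finset.mem_Icc] at *; omega)
      (fun j hj => by show j + b - b = j; omega)
      (fun s hs => by simp only [Finset.mem_Icc] at hs; show s - b + b = s; omega)
      (fun j hj => by
        have : m + (j + b) - b = m + j := by omega
        rw [this])
  rw [Finset.sum_congr rfl inner, Finset.sum_comm]
  apply Finset.sum_eq_zero
  intro s hs
  simp only [Finset.mem_Icc] at hs
  have step : ∀ b ∈ Finset.range (k+1),
      ((-1:MvPolynomial (Fin k) ℤ))^(m+i+b) * (eP k b * hP k (m+s-b))
      = ((-1:MvPolynomial (Fin k) ℤ))^(m+i) * ((-1)^b * eP k b * hP k (m+s-b)) := by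
    intro b hb
    rw [pow_add]
    ring
  rw [Finset.sum_congr rfl step, ← Finset.mul_sum, key (m+s) (by omega), mul_zero]

/-- Matrix identity `G = A·H`: for `n ≥ k ≥ 1` and `1 ≤ i ≤ k`,
`(-1)^{n-k+i} G_{n-k+i}(z) = Σ_{j=1}^{k} A_{ij} · (-1)^{n-k+j} h_{n-k+j}(z)`. -/
theorem groth_eq_A_mul_h (n k : ℕ) (hk : 1 ≤ k) (hkn : k ≤ n)
    (i : ℕ) (hi1 : 1 ≤ i) (hik : i ≤ k) :
    (-1) ^ (n - k + i) * GP k (n - k + i)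
      = ∑ j ∈ Finset.Icc 1 k, AMat k i j * ((-1) ^ (n - k + j) * hP k (n - k + j)) := by
  calc (-1:MvPolynomial (Fin k) ℤ) ^ (n - k + i) * GP k (n - k + i)
      = ∑ j ∈ Finset.Icc 1 (k+i), ∑ b ∈ Finset.range (k+1), (if i ≤ j ∧ b+j ≤ k+i then ((-1:MvPolynomial (Fin k) ℤ))^(n-k+i+b) * (eP k b * hP k (n-k+j)) else 0) := piece1 i (n-k) hi1
    _ = ∑ j ∈ Finset.Icc 1 (k+i), ∑ b ∈ Finset.range (k+1), (((if j < i ∧ k+1 ≤ b+j then ((-1:MvPolynomial (Fin k) ℤ))^(n-k+i+b+1) * (eP k b * hP k (n-k+j)) else 0) + (if i ≤ j ∧ b+j ≤ k then ((-1:MvPolynomial (Fin k) ℤ))^(n-k+i+b) * (eP k b * hP k (n-k+j)) else 0)) + (if k+1 ≤ b+j ∧ b+j ≤ k+i then ((-1:MvPolynomial (Fin k) ℤ))^(n-k+i+b) * (eP k b * hP k (n-k+j)) else 0)) := by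
        apply Finset.sum_congr rfl
        intro j hj
        simp only [Finset.mem_Icc] at hj
        apply Finset.sum_congr rfl
        intro b hb
        simp only [Finset.mem_range] at hb
        split_ifs <;> first | (exfalso; omega) | ring | (rw [pow_succ]; ring)
    _ = ∑ j ∈ Finset.Icc 1 (k+i), ∑ b ∈ Finset.range (k+1), ((if j < i ∧ k+1 ≤ b+j then ((-1:MvPolynomial (Fin k) ℤ))^(n-k+i+b+1) * (eP k b * hP k (n-k+j)) else 0) + (if i ≤ j ∧ b+j ≤ k then ((-1:MvPolynomial (Fin k) ℤ))^(n-k+i+b) * (eP k b * hP k (n-k+j)) else 0)) + ∑ j ∈ Finset.Icc 1 (k+i), ∑ b ∈ Finset.range (k+1), (if k+1 ≤ b+j ∧ b+j ≤ k+i then ((-1:MvPolynomial (Fin k) ℤ))^(n-k+i+b) * (eP k b * hP k (n-k+j)) else 0) := Finset.sum_congr rfl (fun j _ => Finset.sum_add_distrib) |>.trans Finset.sum_add_distrib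
    _ = ∑ j ∈ Finset.Icc 1 (k+i), ∑ b ∈ Finset.range (k+1), ((if j < i ∧ k+1 ≤ b+j then ((-1:MvPolynomial (Fin k) ℤ))^(n-k+i+b+1) * (eP k b * hP k (n-k+j)) else 0) + (if i ≤ j ∧ b+j ≤ k then ((-1:MvPolynomial (Fin k) ℤ))^(n-k+i+b) * (eP k b * hP k (n-k+j)) else 0)) := by rw [piece3 i (n-k), add_zero]
    _ = ∑ j ∈ Finset.Icc 1 k, AMat k i j * ((-1) ^ (n - k + j) * hP k (n - k + j)) :=
        (piece2 i (n-k) hi1 hik).symm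

end
end

section
/- Cauchy-type formula for the equivariant Grothendieck polynomials: for every integer ℓ ≥ 1 one has Σ_{a,b ≥ 0, a+b = ℓ} (-1)^a G'_a(z,ζ) e_b(z) = c'_{≥ℓ}(z,ζ) in ℤ[z_1,…,z_k, ζ_1,…,ζ_n]. -/
open Finset MvPolynomial

noncomputable section

/-- `e_r(z)`: elementary symmetric polynomial in the variables `z_1,…,z_k`
inside `ℤ[z_1,…,z_k, ζ_1,…,ζ_n]`. -/
def eZ (k n : ℕ) (r : ℕ) : MvPolynomial (Fin k ⊕ Fin n) ℤ :=
  esymmF (fun i : Fin k => X (Sum.inl i)) r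

/-- `e_r(ζ)`: elementary symmetric polynomial in the variables `ζ_1,…,ζ_n`. -/
def eZeta (k n : ℕ) (r : ℕ) : MvPolynomial (Fin k ⊕ Fin n) ℤ :=
  esymmF (fun j : Fin n => X (Sum.inr j)) r

/-- `h_r(z)`: complete homogeneous symmetric polynomial in `z_1,…,z_k`. -/
def hZ (k n : ℕ) (r : ℕ) : MvPolynomial (Fin k ⊕ Fin n) ℤ :=
  hsymmF (fun i : Fin k => X (Sum.inl i)) r

/-- The single-row Grothendieck polynomial
`G_j(z) = Σ_{a,b ≥ 0, a+b ≤ k} (-1)^b h_{j+a}(z) e_b(z)`. -/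
def GZ (k n : ℕ) (j : ℕ) : MvPolynomial (Fin k ⊕ Fin n) ℤ :=
  ∑ a ∈ Finset.range (k + 1), ∑ b ∈ Finset.range (k + 1 - a),
    (-1) ^ b * hZ k n (j + a) * eZ k n b

/-- The equivariant complete homogeneous polynomial
`h'_j(z,ζ) = Σ_{a+b=j} (-1)^a e_a(ζ) h_b(z)`. -/
def hPrime (k n : ℕ) (j : ℕ) : MvPolynomial (Fin k ⊕ Fin n) ℤ :=
  ∑ p ∈ Finset.HasAntidiagonal.antidiagonal j, (-1) ^ p.1 * eZeta k n p.1 * hZ k n p.2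

/-- The equivariant Grothendieck polynomial
`G'_j(z,ζ) = Σ_{a+b=j} (-1)^a e_a(ζ) G_b(z)`. -/
def GPrime (k n : ℕ) (j : ℕ) : MvPolynomial (Fin k ⊕ Fin n) ℤ :=
  ∑ p ∈ Finset.HasAntidiagonal.antidiagonal j, (-1) ^ p.1 * eZeta k n p.1 * GZ k n p.2

/-- The truncation `c^z_{≥j} = Σ_{i=j}^{k} (-1)^{i-j} e_i(z)`. -/
def cGeZ (k n : ℕ) (j : ℕ) : MvPolynomial (Fin k ⊕ Fin n) ℤ :=
  ∑ i ∈ Finset.Icc j k, (-1) ^ (i - j) * eZ k n i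

/-- `c'_{≥ℓ}(z,ζ) = e_ℓ(ζ) + Σ_{m=1}^{k-1} e_{ℓ-m}(ζ) c^z_{≥ m+1}`,
with the convention `e_s(ζ) = 0` for `s < 0` (i.e. for `m > ℓ`). -/
def cPrimeGe (k n : ℕ) (ℓ : ℕ) : MvPolynomial (Fin k ⊕ Fin n) ℤ :=
  eZeta k n ℓ + ∑ m ∈ Finset.Icc 1 (k - 1),
    (if m ≤ ℓ then eZeta k n (ℓ - m) * cGeZ k n (m + 1) else 0)

/-!
With `H(t) = Σ h_r(z) t^r = ∏ (1 - z_i t)⁻¹` and `E(t) = Σ e_r(z) t^r = ∏ (1 + z_i t)` one has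
`H(t) E(-t) = 1`. Splitting each antidiagonal of this identity turns the double sum defining `G_j`
into `Σ G_j t^j = 1 + c^z_{≥0} H(t) - H(t) C(t)`, where `C(t) = Σ (-1)^i c^z_{≥i} t^i` collects the
tails of `E(-t)`. Multiplying by `E(-t)` and substituting `t ↦ -t` gives
`(Σ (-1)^j G_j t^j) E(t) = 1 + Σ_{m ≥ 1} c^z_{≥m+1} t^m`. Since `Σ (-1)^j G'_j t^j` is
`E_ζ(t) Σ (-1)^j G_j t^j`, the left-hand side is the coefficient of `t^ℓ` in
`E_ζ(t) (1 + Σ_{m ≥ 1} c^z_{≥m+1} t^m)`, which is `c'_{≥ℓ}` because `c^z_{≥m+1} = 0` for `m ≥ k`.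
-/

section SymmetricSeries

variable {R : Type*} [CommRing R]

open PowerSeries

theorem PowerSeries.rescale_C (a r : R) : rescale a (C r) = C r := by
  ext n
  cases n <;> simp [coeff_C]

theorem PowerSeries.rescale_neg_one_rescale_neg_one (f : R⟦X⟧) :
    rescale (-1) (rescale (-1) f) = f := by
  rw [rescale_rescale, neg_one_mul, neg_neg, rescale_one, RingHom.id_apply]

theorem PowerSeries.mk_pow_mul_one_sub (a : R) : mk (fun n => a ^ n) * (1 - C a * X) = 1 := by
  ext n
  cases n with
  | zero => simp
  | succ n => simp [mul_sub, pow_succ, mul_comm (C a), ← mul_assoc, coeff_succ_mul_X]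

variable {α : Type*} [Fintype α]

theorem PowerSeries.mk_esymm_eq_prod (f : α → R) :
    mk (fun r => ∑ t ∈ powersetCard r univ, ∏ j ∈ t, f j) = ∏ i, (1 + C (f i) * X) := by
  classical
  ext r
  simp_rw [prod_one_add, mul_comm (C _), Finset.prod_mul_distrib, prod_const, ← map_prod, map_sum,
    coeff_mk, coeff_X_pow_mul', coeff_C, powersetCard_eq_filter, sum_filter]
  refine sum_congr rfl fun t _ => ?_
  split_ifs <;> first | rfl | omega

theorem PowerSeries.mk_hsymm_eq_prod [DecidableEq α] (f : α → R) :
    mk (fun r => ∑ μ : Sym α r, (μ.1.map f).prod) = ∏ i, mk (fun n => f i ^ n) := by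
  ext r
  rw [coeff_mk, coeff_prod]
  simp_rw [coeff_mk]
  refine sum_bij' (fun μ _ => Multiset.toFinsupp μ.1)
    (fun l hl => (⟨Finsupp.toMultiset l, by
      simpa [Finsupp.card_toMultiset, Finsupp.sum_fintype] using (mem_finsuppAntidiag.mp hl).1⟩ :
        Sym α r))
    (fun μ _ => mem_finsuppAntidiag.mpr
      ⟨(Multiset.sum_count_eq_card fun a _ => mem_univ a).trans μ.2, subset_univ _⟩)
    (fun _ _ => mem_univ _) (fun μ _ => by ext1; simp) (fun l _ => by simp) fun μ _ => ?_
  rw [prod_multiset_map_count]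
  exact prod_subset (subset_univ _) fun x _ hx => by simp_all

theorem PowerSeries.mk_hsymm_mul_rescale_mk_esymm [DecidableEq α] (f : α → R) :
    mk (fun r => ∑ μ : Sym α r, (μ.1.map f).prod) *
      rescale (-1) (mk fun r => ∑ t ∈ powersetCard r univ, ∏ j ∈ t, f j) = 1 := by
  rw [mk_hsymm_eq_prod, mk_esymm_eq_prod, map_prod, ← prod_mul_distrib]
  refine prod_eq_one fun i _ => ?_
  simpa [rescale_X, rescale_C, sub_eq_add_neg] using mk_pow_mul_one_sub (f i)

end SymmetricSeries

theorem Finset.Nat.sum_antidiagonal_add {M : Type*} [AddCommMonoid M] (f : ℕ → ℕ → M) (j d : ℕ) :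
    ∑ p ∈ antidiagonal (j + d), f p.1 p.2 + f j d =
      ∑ p ∈ antidiagonal d, f (j + p.1) p.2 + ∑ p ∈ antidiagonal j, f p.1 (p.2 + d) := by
  rw [Nat.sum_antidiagonal_eq_sum_range_succ f, Nat.sum_antidiagonal_eq_sum_range_succ (f <| j + ·),
    Nat.sum_antidiagonal_eq_sum_range_succ (fun a b => f a (b + d)), sum_range_succ _ j,
    Nat.succ_eq_add_one, add_assoc j d 1, sum_range_add]
  rw [add_comm (∑ x ∈ range j, _), add_assoc, Nat.sub_self, zero_add]
  congr 1
  · exact sum_congr rfl fun x _ => by rw [add_tsub_add_eq_tsub_left]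
  · exact congrArg (· + f j d) <| sum_congr rfl fun x hx => by
      rw [Nat.sub_add_comm (mem_range.mp hx).le]

section Grothendieck

variable (k n : ℕ)

open PowerSeries

theorem mk_hZ_mul_rescale_mk_eZ : mk (hZ k n) * rescale (-1) (mk (eZ k n)) = 1 :=
  mk_hsymm_mul_rescale_mk_esymm _

theorem sum_antidiagonal_hZ_mul_eZ (s : ℕ) :
    ∑ p ∈ antidiagonal s, hZ k n p.1 * ((-1) ^ p.2 * eZ k n p.2) = if s = 0 then 1 else 0 := by
  simpa [PowerSeries.coeff_mul, PowerSeries.coeff_one] using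
    congrArg (coeff s) (mk_hZ_mul_rescale_mk_eZ k n)

theorem eZ_eq_zero_of_lt {b : ℕ} (hb : k < b) : eZ k n b = 0 := by
  rw [eZ, esymmF, powersetCard_eq_empty.mpr (by simpa using hb), sum_empty]

theorem cGeZ_eq_zero_of_lt {j : ℕ} (hj : k < j) : cGeZ k n j = 0 := by
  rw [cGeZ, Icc_eq_empty (by omega), sum_empty]

theorem cGeZ_eq_eZ_sub (j : ℕ) : cGeZ k n j = eZ k n j - cGeZ k n (j + 1) := by
  rcases le_or_gt j k with hj | hj
  · rw [cGeZ, cGeZ, Icc_eq_cons_Ioc hj, sum_cons, Icc_add_one_left_eq_Ioc, Nat.sub_self, pow_zero,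
      one_mul, sub_eq_add_neg, ← sum_neg_distrib]
    refine congrArg _ <| sum_congr rfl fun i hi => ?_
    rw [show i - j = i - (j + 1) + 1 by rw [mem_Ioc] at hi; omega, pow_succ]
    ring
  · rw [cGeZ_eq_zero_of_lt k n hj, cGeZ_eq_zero_of_lt k n (by omega), eZ_eq_zero_of_lt k n hj,
      sub_zero]

theorem GZ_eq_sum_range_sum_antidiagonal (j : ℕ) :
    GZ k n j = ∑ d ∈ range (k + 1), ∑ p ∈ antidiagonal d,
      (-1) ^ p.2 * hZ k n (j + p.1) * eZ k n p.2 := by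
  rw [GZ, ← sum_range_diag_flip]
  exact sum_congr rfl fun d _ =>
    (Nat.sum_antidiagonal_eq_sum_range_succ
      (fun a b => (-1) ^ b * hZ k n (j + a) * eZ k n b) d).symm

theorem neg_one_pow_mul_cGeZ (i : ℕ) :
    (-1) ^ i * cGeZ k n i = ∑ d ∈ range (k + 1), (-1) ^ (i + d) * eZ k n (i + d) := by
  rw [cGeZ, ← Ico_add_one_right_eq_Icc, sum_Ico_eq_sum_range, mul_sum]
  refine sum_subset (range_subset_range.mpr (by omega)) (fun d hd hd' => ?_) |>.trans
    (sum_congr rfl fun d _ => ?_)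
  · simp only [mem_range] at hd hd'
    rw [eZ_eq_zero_of_lt k n (by omega), mul_zero, mul_zero]
  · rw [Nat.add_sub_cancel_left, ← mul_assoc, ← pow_add]

theorem GZ_eq_sub_sum_hZ_mul_cGeZ (j : ℕ) :
    GZ k n j = (if j = 0 then 1 else 0) + hZ k n j * cGeZ k n 0
      - ∑ p ∈ antidiagonal j, hZ k n p.1 * ((-1) ^ p.2 * cGeZ k n p.2) := by
  have slice (d : ℕ) : ∑ p ∈ antidiagonal d, (-1) ^ p.2 * hZ k n (j + p.1) * eZ k n p.2 =
      (if j + d = 0 then 1 else 0) + hZ k n j * ((-1) ^ d * eZ k n d)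
        - ∑ p ∈ antidiagonal j, hZ k n p.1 * ((-1) ^ (p.2 + d) * eZ k n (p.2 + d)) := by
    have split := Nat.sum_antidiagonal_add (fun a b => hZ k n a * ((-1) ^ b * eZ k n b)) j d
    rw [sum_antidiagonal_hZ_mul_eZ] at split
    rw [eq_sub_iff_add_eq, split]
    exact congrArg (· + _) <| sum_congr rfl fun p _ => by ring
  have hc0 := neg_one_pow_mul_cGeZ k n 0
  simp only [pow_zero, one_mul, zero_add] at hc0
  simp_rw [GZ_eq_sum_range_sum_antidiagonal, slice, sum_sub_distrib, sum_add_distrib, hc0,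
    neg_one_pow_mul_cGeZ, mul_sum]
  rw [sum_comm (s := range (k + 1))]
  congr 2
  simp [Nat.add_eq_zero_iff, ite_and]

theorem mk_GZ : mk (GZ k n) =
    1 + PowerSeries.C (cGeZ k n 0) * mk (hZ k n) - mk (hZ k n) * rescale (-1) (mk (cGeZ k n)) := by
  ext j : 1
  rw [coeff_mk, GZ_eq_sub_sum_hZ_mul_cGeZ, map_sub, map_add, PowerSeries.coeff_C_mul, coeff_mk,
    PowerSeries.coeff_one, PowerSeries.coeff_mul]
  simp only [coeff_rescale, coeff_mk]
  ring

theorem rescale_mk_GZ_mul_mk_eZ :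
    rescale (-1) (mk (GZ k n)) * mk (eZ k n) =
      mk fun m => if m = 0 then 1 else cGeZ k n (m + 1) := by
  have key : mk (GZ k n) * rescale (-1) (mk (eZ k n)) =
      rescale (-1) (mk (eZ k n)) + PowerSeries.C (cGeZ k n 0) - rescale (-1) (mk (cGeZ k n)) := by
    rw [mk_GZ]
    linear_combination (PowerSeries.C (cGeZ k n 0) - rescale (-1) (mk (cGeZ k n))) *
      mk_hZ_mul_rescale_mk_eZ k n
  have key' := congrArg (rescale (-1)) key
  simp only [map_mul, map_add, map_sub, rescale_neg_one_rescale_neg_one, rescale_C] at key'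
  rw [key']
  ext (_ | m)
  · simp [eZ, esymmF]
  · simp [cGeZ_eq_eZ_sub k n (m + 1)]

theorem mk_GPrime : mk (GPrime k n) = rescale (-1) (mk (eZeta k n)) * mk (GZ k n) := by
  ext j : 1
  simp [GPrime, PowerSeries.coeff_mul, coeff_rescale]

theorem cPrimeGe_eq_sum_antidiagonal (ℓ : ℕ) :
    cPrimeGe k n ℓ =
      ∑ p ∈ antidiagonal ℓ, eZeta k n p.1 * if p.2 = 0 then 1 else cGeZ k n (p.2 + 1) := by
  have truncate : ∑ m ∈ Icc 1 (k - 1), (if m ≤ ℓ then eZeta k n (ℓ - m) * cGeZ k n (m + 1) else 0) =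
      ∑ m ∈ Icc 1 ℓ, eZeta k n (ℓ - m) * cGeZ k n (m + 1) := by
    rw [← sum_filter]
    refine sum_subset_zero_on_sdiff (fun m hm => by simp only [mem_filter, mem_Icc] at hm ⊢; omega) (fun m hm => ?_)
      fun _ _ => rfl
    simp only [mem_sdiff, mem_Icc, mem_filter, not_and, not_le] at hm
    rw [cGeZ_eq_zero_of_lt k n (by omega), mul_zero]
  rw [cPrimeGe, truncate, ← Nat.sum_antidiagonal_swap]
  simp only [Prod.fst_swap, Prod.snd_swap]
  rw [Nat.sum_antidiagonal_eq_sum_range_succ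
      (fun m i => eZeta k n i * if m = 0 then 1 else cGeZ k n (m + 1)),
    Nat.range_succ_eq_Icc_zero, ← insert_Icc_add_one_left_eq_Icc (Nat.zero_le ℓ),
    sum_insert (by simp), if_pos rfl, mul_one, Nat.sub_zero, zero_add]
  exact congrArg _ <| sum_congr rfl fun m hm => by rw [if_neg (by rw [mem_Icc] at hm; omega)]

end Grothendieck

theorem cauchy_GPrime_general (k n : ℕ) (ℓ : ℕ) :
    ∑ p ∈ Finset.HasAntidiagonal.antidiagonal ℓ, (-1) ^ p.1 * GPrime k n p.1 * eZ k n p.2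
      = cPrimeGe k n ℓ := by
  open PowerSeries in
  calc _ = coeff ℓ (rescale (-1) (mk (GPrime k n)) * mk (eZ k n)) := by
          simp [PowerSeries.coeff_mul, coeff_rescale]
    _ = coeff ℓ (mk (eZeta k n) * (rescale (-1) (mk (GZ k n)) * mk (eZ k n))) := by
          rw [mk_GPrime, map_mul (rescale (-1)), rescale_neg_one_rescale_neg_one, mul_assoc]
    _ = cPrimeGe k n ℓ := by
          rw [rescale_mk_GZ_mul_mk_eZ, cPrimeGe_eq_sum_antidiagonal, PowerSeries.coeff_mul]
          simp

/-- Cauchy-type formula for the equivariant Grothendieck polynomials: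
for `ℓ ≥ 1`, `Σ_{a+b=ℓ} (-1)^a G'_a(z,ζ) e_b(z) = c'_{≥ℓ}(z,ζ)`. -/
theorem cauchy_GPrime (k n : ℕ) (hk : 1 ≤ k) (hn : 1 ≤ n) (ℓ : ℕ) (hℓ : 1 ≤ ℓ) :
    ∑ p ∈ Finset.HasAntidiagonal.antidiagonal ℓ, (-1) ^ p.1 * GPrime k n p.1 * eZ k n p.2
      = cPrimeGe k n ℓ :=
  cauchy_GPrime_general k n ℓ
end
end

section
/- Matrix identity for the antidiagonal transpose A' of A: for every 1 ≤ i ≤ k one has Σ_{j=1}^{k} A'_{ij} · (binom(k, j) − e_j(z)) = (Π_{i=1}^{k} (1 − z_i)) · binom(k−1, k−i) in ℤ[z_1,…,z_k], where A'_{ij} := A_{k+1-j, k+1-i}. -/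
open Finset MvPolynomial

noncomputable section

/-!
Put `d_j = (-1)^j (binom(k, j) - e_j)`. Row `i` of `A'` splits at `j = i` into
`-c_{≥i} Σ_{j<i} d_j` and `(-1)^i c_{≤i-1} Σ_{j≥i} d_j`. The partial sums of `d` are
`(-1)^m binom(k-1, m) - c_{≤m}` (alternating partial sums of a binomial row), the full sum is
`-Π (1 - z_a)`, and `c_{≤i-1} + (-1)^i c_{≥i} = Π (1 - z_a)`; substituting, everything cancels
except `Π (1 - z_a) · binom(k-1, i-1)`.
-/

lemma prod_one_sub_eq_sum_esymmF {R : Type*} [CommRing R] {m : ℕ} (f : Fin m → R) :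
    ∏ a, (1 - f a) = ∑ r ∈ range (m + 1), (-1) ^ r * esymmF f r := by
  simp_rw [sub_eq_add_neg, prod_one_add, sum_powerset, card_univ, Fintype.card_fin, esymmF,
    mul_sum]
  refine sum_congr rfl fun r _ => sum_congr rfl fun t ht => ?_
  rw [prod_neg, (mem_powersetCard.1 ht).2]

lemma cLe_self (k : ℕ) : cLe k k = ∏ a : Fin k, (1 - X a) :=
  (prod_one_sub_eq_sum_esymmF _).symm

lemma cLe_add_neg_one_pow_mul_cGe {k m : ℕ} (hm : m ≤ k) :
    cLe k m + (-1) ^ (m + 1) * cGe k (m + 1) = ∏ a : Fin k, (1 - X a) := by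
  rw [← cLe_self, cLe, cLe, ← sum_range_add_sum_Ico _ (by omega : m + 1 ≤ k + 1), cGe,
    ← Ico_add_one_right_eq_Icc, mul_sum]
  congr 1
  refine sum_congr rfl fun r hr => ?_
  rw [← mul_assoc, ← pow_add, Nat.add_sub_cancel' (mem_Ico.1 hr).1]

lemma sum_range_neg_one_pow_mul_choose_sub_eP {k : ℕ} (hk : 1 ≤ k) (m : ℕ) :
    ∑ j ∈ range (m + 1), (-1) ^ j * ((k.choose j : MvPolynomial (Fin k) ℤ) - eP k j)
      = (-1) ^ m * ((k - 1).choose m : MvPolynomial (Fin k) ℤ) - cLe k m := by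
  obtain ⟨n, rfl⟩ : ∃ n, k = n + 1 := ⟨k - 1, by omega⟩
  have h := congrArg (Int.cast : ℤ → MvPolynomial (Fin (n + 1)) ℤ)
    (Int.alternating_sum_range_choose_eq_choose (n := n) (m := m))
  push_cast at h
  simp_rw [mul_sub, sum_sub_distrib, h, cLe, Nat.add_sub_cancel]

lemma AMat_antidiag_of_lt {k i j : ℕ} (hj : 1 ≤ j) (hji : j < i) (hik : i ≤ k) :
    AMat k (k + 1 - j) (k + 1 - i) = -(-1) ^ j * cGe k i := by
  obtain ⟨t, rfl⟩ : ∃ t, j = t + 1 := ⟨j - 1, by omega⟩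
  rw [AMat, if_pos (by omega), show k - (k + 1 - (t + 1)) = t by omega,
    show k - (k + 1 - i) + 1 = i by omega, pow_succ]
  ring

lemma AMat_antidiag_of_le {k i j : ℕ} (hij : i ≤ j) (hjk : j ≤ k) :
    AMat k (k + 1 - j) (k + 1 - i) = (-1) ^ i * (-1) ^ j * cLe k (i - 1) := by
  obtain ⟨t, rfl⟩ : ∃ t, j = i + t := ⟨j - i, by omega⟩
  rw [AMat, if_neg (by omega), show k + 1 - i - (k + 1 - (i + t)) = t by omega,
    show k - (k + 1 - i) = i - 1 by omega, ← pow_add,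
    show i + (i + t) = 2 * i + t by omega, pow_add, pow_mul, neg_one_sq, one_pow, one_mul]

/-- Matrix identity for the antidiagonal transpose `A'` of `A` (`A'_{ij} = A_{k+1-j, k+1-i}`):
for `1 ≤ i ≤ k`,
`Σ_{j=1}^{k} A'_{ij} (binom(k,j) − e_j(z)) = (Π_{i=1}^{k} (1 − z_i)) · binom(k−1, k−i)`. -/
theorem Aprime_mul_binom_sub_e (k : ℕ) (hk : 1 ≤ k)
    (i : ℕ) (hi1 : 1 ≤ i) (hik : i ≤ k) :
    ∑ j ∈ Finset.Icc 1 k, AMat k (k + 1 - j) (k + 1 - i)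
        * ((Nat.choose k j : MvPolynomial (Fin k) ℤ) - eP k j)
      = (∏ a : Fin k, (1 - X a)) * (Nat.choose (k - 1) (k - i) : MvPolynomial (Fin k) ℤ) := by
  obtain ⟨m, rfl⟩ : ∃ m, i = m + 1 := ⟨i - 1, by omega⟩
  set d : ℕ → MvPolynomial (Fin k) ℤ := fun j => (-1) ^ j * ((k.choose j : _) - eP k j)
  have hd0 : d 0 = 0 := by simp [d, eP, esymmF]
  have hsplit : ∑ j ∈ Icc 1 k, AMat k (k + 1 - j) (k + 1 - (m + 1))
        * ((k.choose j : MvPolynomial (Fin k) ℤ) - eP k j)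
      = -cGe k (m + 1) * ∑ j ∈ Ico 1 (m + 1), d j
        + (-1) ^ (m + 1) * cLe k m * ∑ j ∈ Ico (m + 1) (k + 1), d j := by
    rw [← Ico_add_one_right_eq_Icc, ← sum_Ico_consecutive _ hi1 (by omega : m + 1 ≤ k + 1),
      mul_sum, mul_sum]
    congr 1 <;> refine sum_congr rfl fun j hj => ?_ <;> rw [mem_Ico] at hj
    · rw [AMat_antidiag_of_lt hj.1 hj.2 hik]; ring
    · rw [AMat_antidiag_of_le hj.1 (by omega), Nat.add_sub_cancel]; ring
  rw [hsplit, sum_Ico_eq_sub _ (by omega), sum_Ico_eq_sub _ (by omega), sum_range_one, hd0,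
    sum_range_neg_one_pow_mul_choose_sub_eP hk, sum_range_neg_one_pow_mul_choose_sub_eP hk,
    Nat.choose_eq_zero_of_lt (by omega : k - 1 < k), cLe_self,
    ← cLe_add_neg_one_pow_mul_cGe (by omega : m ≤ k),
    show k - (m + 1) = k - 1 - m by omega, Nat.choose_symm (by omega)]
  have hsq : ((-1) ^ m * (-1) ^ m : MvPolynomial (Fin k) ℤ) = 1 := by
    rw [← pow_add, Even.neg_one_pow ⟨m, rfl⟩]
  linear_combination
    cLe k m * (((k - 1).choose m : MvPolynomial (Fin k) ℤ) - cGe k (m + 1)) * hsq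

end
end

section
/- Binomial identity for truncated sums of elementary symmetric polynomials of shifted variables: for integers 1 ≤ k ≤ n and 1 ≤ ℓ ≤ n, one has Σ_{s=n−k+1}^{ℓ} (-1)^s binom(n−s, ℓ−s) e_{s+k−n}(1−z_1,…,1−z_k) = (-1)^{n−k+1} ( binom(k, ℓ+k−n) − e_{ℓ+k−n}(z) ) in ℤ[z_1,…,z_k], where the sum is empty if ℓ ≤ n−k. -/
open Finset MvPolynomial

noncomputable section

/-- `e_r(1−z_1,…,1−z_k)` in `ℤ[z_1,…,z_k]`. -/
def ePOneSub (k : ℕ) (r : ℕ) : MvPolynomial (Fin k) ℤ :=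
  esymmF (fun i : Fin k => 1 - X i) r

/-! `e_m(z)` is obtained by writing `z_i = -(1 - z_i) + 1` and expanding: a `j`-subset of the
variables `-(1 - z_i)` lies in `binom(k - j, m - j)` of the `m`-subsets, which gives
`e_m(z) = Σ_{j ≤ m} (-1)^j binom(k - j, m - j) e_j(1 - z)`. The terms `j ≥ 1` of this sum are,
after the shift `s = j + n - k`, the truncated sum of the theorem, and the term `j = 0` is
`binom(k, m)`. -/

theorem Finset.sum_powersetCard_sum_powersetCard {α M : Type*} [DecidableEq α]
    [AddCommMonoid M] (u : Finset α) {j r : ℕ} (hjr : j ≤ r) (g : Finset α → M) :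
    ∑ S ∈ u.powersetCard r, ∑ T ∈ S.powersetCard j, g T
      = (#u - j).choose (r - j) • ∑ T ∈ u.powersetCard j, g T := by
  rw [sum_comm' (t' := u.powersetCard j) (s' := fun T => {S ∈ u.powersetCard r | T ⊆ S})]
  · rw [smul_sum]
    refine sum_congr rfl fun T hT => ?_
    obtain ⟨hTu, rfl⟩ := mem_powersetCard.1 hT
    rw [sum_const, card_filter_powersetCard_subset T u r hTu hjr]
  · intro S T
    simp only [mem_powersetCard, mem_filter]
    exact ⟨fun ⟨⟨hSu, hS⟩, hTS, hT⟩ => ⟨⟨⟨hSu, hS⟩, hTS⟩, hTS.trans hSu, hT⟩,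
      fun ⟨⟨⟨hSu, hS⟩, hTS⟩, _, hT⟩ => ⟨⟨hSu, hS⟩, hTS, hT⟩⟩

theorem esymmF_add_one {R : Type*} [CommRing R] {m : ℕ} (f : Fin m → R) (r : ℕ) :
    esymmF (fun i => f i + 1) r
      = ∑ j ∈ range (r + 1), ((m - j).choose (r - j) : R) * esymmF f j := by
  have expand : ∀ S ∈ powersetCard r (univ : Finset (Fin m)),
      ∏ i ∈ S, (f i + 1) = ∑ j ∈ range (r + 1), ∑ T ∈ S.powersetCard j, ∏ i ∈ T, f i := by
    intro S hS
    rw [prod_add_one, sum_powerset, (mem_powersetCard.1 hS).2]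
  rw [esymmF, sum_congr rfl expand, sum_comm]
  refine sum_congr rfl fun j hj => ?_
  rw [sum_powersetCard_sum_powersetCard _ (Nat.lt_succ_iff.1 (mem_range.1 hj)), card_univ,
    Fintype.card_fin, nsmul_eq_mul, esymmF]

theorem esymmF_neg {R : Type*} [CommRing R] {m : ℕ} (f : Fin m → R) (r : ℕ) :
    esymmF (fun i => -f i) r = (-1) ^ r * esymmF f r := by
  rw [esymmF, esymmF, mul_sum]
  refine sum_congr rfl fun S hS => ?_
  rw [prod_neg, (mem_powersetCard.1 hS).2]

theorem eP_eq_sum_ePOneSub (k m : ℕ) :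
    eP k m = ∑ t ∈ range (m + 1),
      (-1) ^ t * ((k - t).choose (m - t) : MvPolynomial (Fin k) ℤ) * ePOneSub k t := by
  have hX : (fun i : Fin k => (X i : MvPolynomial (Fin k) ℤ)) = fun i => -(1 - X i) + 1 := by
    ext1 i; ring
  rw [eP, hX, esymmF_add_one]
  refine sum_congr rfl fun t _ => ?_
  rw [esymmF_neg, ePOneSub]
  ring

theorem truncated_esymm_shift_general (n k : ℕ) (hkn : k ≤ n)
    (ℓ : ℕ) :
    ∑ s ∈ Finset.Icc (n - k + 1) ℓ,
        (-1) ^ s * (Nat.choose (n - s) (ℓ - s) : MvPolynomial (Fin k) ℤ)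
          * ePOneSub k (s + k - n)
      = (-1) ^ (n - k + 1)
          * ((Nat.choose k (ℓ + k - n) : MvPolynomial (Fin k) ℤ) - eP k (ℓ + k - n)) := by
  set m := ℓ + k - n
  have shift : ∑ s ∈ Icc (n - k + 1) ℓ,
        (-1) ^ s * (Nat.choose (n - s) (ℓ - s) : MvPolynomial (Fin k) ℤ) * ePOneSub k (s + k - n)
      = (-1) ^ (n - k) * ∑ t ∈ range m,
          (-1) ^ (t + 1) * ((k - (t + 1)).choose (m - (t + 1)) : MvPolynomial (Fin k) ℤ)
            * ePOneSub k (t + 1) := by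
    rw [← Ico_add_one_right_eq_Icc, sum_Ico_eq_sum_range, show ℓ + 1 - (n - k + 1) = m by omega,
      mul_sum]
    refine sum_congr rfl fun t ht => ?_
    obtain ⟨hn, hℓ, hidx⟩ : n - (n - k + 1 + t) = k - (t + 1) ∧
        ℓ - (n - k + 1 + t) = m - (t + 1) ∧ n - k + 1 + t + k - n = t + 1 := by
      have := mem_range.1 ht
      omega
    rw [hn, hℓ, hidx, show n - k + 1 + t = (n - k) + (t + 1) by omega, pow_add]
    ring
  have e0 : ePOneSub k 0 = 1 := by simp [ePOneSub, esymmF]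
  rw [shift, pow_succ, eP_eq_sum_ePOneSub k m, sum_range_succ', e0, Nat.sub_zero, Nat.sub_zero]
  ring

/-- Binomial identity for truncated sums of elementary symmetric polynomials of
shifted variables: for `1 ≤ k ≤ n` and `1 ≤ ℓ ≤ n`,
`Σ_{s=n−k+1}^{ℓ} (-1)^s binom(n−s, ℓ−s) e_{s+k−n}(1−z)
  = (-1)^{n−k+1} (binom(k, ℓ+k−n) − e_{ℓ+k−n}(z))`
(the sum being empty for `ℓ ≤ n−k`; indices `ℓ+k−n < 0` are interpreted as `0`,
which is rendered here by truncated natural subtraction, both sides then vanishing). -/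
theorem truncated_esymm_shift (n k : ℕ) (hk : 1 ≤ k) (hkn : k ≤ n)
    (ℓ : ℕ) (hℓ1 : 1 ≤ ℓ) (hℓn : ℓ ≤ n) :
    ∑ s ∈ Finset.Icc (n - k + 1) ℓ,
        (-1) ^ s * (Nat.choose (n - s) (ℓ - s) : MvPolynomial (Fin k) ℤ)
          * ePOneSub k (s + k - n)
      = (-1) ^ (n - k + 1)
          * ((Nat.choose k (ℓ + k - n) : MvPolynomial (Fin k) ℤ) - eP k (ℓ + k - n)) :=
  truncated_esymm_shift_general n k hkn ℓ

end
end
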